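/- arXiv:2604.10680 — 3 statements merged into one kernel-verified Lean document; each statement's English description precedes it below -/
import Mathlib

section
/- Let A ∈ ℝ^{p×n}, b ∈ ℝ^p, E ∈ ℝ^{q×n} and F ∈ ℝ^q, with all vector and matrix inequalities understood entrywise. Suppose the set {x ∈ ℝ^n : A x ≤ b} is nonempty. Then the following are equivalent: (i) E x ≤ F holds for every x ∈ ℝ^n satisfying A x ≤ b; (ii) there exists a matrix P ∈ ℝ^{q×p} with all entries nonnegative such that P A = E and P b ≤ F. -/
/-!
Homogeneous Farkas: a vector `c` either lies in the cone generated by finitely many vectors or is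
strictly separated from it by a linear functional. By induction on the generators: if the
functional `f` separating `c` from the old generators has the wrong sign on a new generator `α`,
project along `α` onto `ker f`. A functional separating the projected data also separates `α`,
which the projection kills, while a conic representation of the projection of `c` lifts to one
of `c` up to a multiple `μ • α`, and `μ ≥ 0` because `f` is negative at `c` and `α` but
nonnegative on the old cone.

The affine form follows by homogenization: test `(e, φ)` against the cone generated by the
`(A i, b i)` and `(0, 1)`. A separating functional yields `x` and `τ ≥ 0` with `A x ≤ τ b` and
`e ⬝ᵥ x > τ φ`. For `τ > 0` rescaling gives a point of `{A x ≤ b}` violating `e ⬝ᵥ x ≤ φ`; for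
`τ = 0`, `x` is a recession direction of the nonempty polyhedron along which `e ⬝ᵥ x` grows
without bound.
-/

open Matrix

section Cone

variable {𝕜 V ι : Type*} [Field 𝕜] [LinearOrder 𝕜] [IsStrictOrderedRing 𝕜]
  [AddCommGroup V] [Module 𝕜 V]

lemma Module.Dual.apply_nonneg_of_mem_hull {f : Module.Dual 𝕜 V} {S : Set V}
    (hS : ∀ v ∈ S, 0 ≤ f v) {v : V} (hv : v ∈ PointedCone.hull 𝕜 S) : 0 ≤ f v := by
  induction hv using Submodule.span_induction with
  | mem v hv => exact hS v hv
  | zero => simp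
  | add v w _ _ hv hw => rw [map_add]; exact add_nonneg hv hw
  | smul r v _ hv => rw [← Nonneg.coe_smul, map_smul]; exact smul_nonneg r.2 hv

theorem PointedCone.mem_hull_image_or_exists_dual (s : Finset ι) (a : ι → V) (c : V) :
    c ∈ PointedCone.hull 𝕜 (a '' s) ∨
      ∃ f : Module.Dual 𝕜 V, (∀ i ∈ s, 0 ≤ f (a i)) ∧ f c < 0 := by
  classical
  induction s using Finset.induction_on generalizing a c with
  | empty =>
    by_cases hc : c = 0
    · exact .inl (hc ▸ zero_mem _)
    · obtain ⟨f, hf⟩ := Module.Projective.exists_dual_eq_one 𝕜 hc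
      exact .inr ⟨-f, by simp, by simp [hf]⟩
  | insert i s _ ih =>
    rw [Finset.coe_insert, Set.image_insert_eq]
    obtain hc | ⟨f, hfs, hfc⟩ := ih a c
    · exact .inl (Submodule.span_mono (Set.subset_insert _ _) hc)
    obtain hfi | hfi := le_or_gt 0 (f (a i))
    · exact .inr ⟨f, Finset.forall_mem_insert _ _ _ |>.2 ⟨hfi, hfs⟩, hfc⟩
    set P : V →ₗ[𝕜] V := LinearMap.id - ((f (a i))⁻¹ • f).smulRight (a i) with hP
    have hPa : P (a i) = 0 := by simp [hP, hfi.ne]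
    obtain hPc | ⟨g, hgs, hgc⟩ := ih (P ∘ a) (P c)
    · left
      have hmap : PointedCone.hull 𝕜 (P '' (a '' s)) = (PointedCone.hull 𝕜 (a '' s)).map P :=
        Submodule.span_image (P : V →ₗ[{c : 𝕜 // 0 ≤ c}] V)
      rw [Set.image_comp, hmap, PointedCone.mem_map] at hPc
      obtain ⟨d, hd, hdc⟩ := hPc
      have hfd : 0 ≤ f d := Module.Dual.apply_nonneg_of_mem_hull (by simpa using hfs) hd
      set μ := (f (a i))⁻¹ * f (c - d)
      have hμ : 0 ≤ μ := mul_nonneg_of_nonpos_of_nonpos (inv_nonpos.2 hfi.le) (by rw [map_sub]; linarith)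
      have hcd : c = μ • a i + d := by
        have : P (c - d) = 0 := by rw [map_sub, hdc, sub_self]
        simp only [hP, LinearMap.sub_apply, LinearMap.id_apply, LinearMap.smulRight_apply,
          LinearMap.smul_apply, smul_eq_mul, sub_eq_zero] at this
        rw [← this]; abel
      exact Submodule.mem_span_insert.2 ⟨⟨μ, hμ⟩, d, hd, hcd⟩
    · refine .inr ⟨g ∘ₗ P, ?_, hgc⟩
      exact Finset.forall_mem_insert _ _ _ |>.2 ⟨by simp [hPa], hgs⟩

end Cone

lemma Module.Dual.exists_apply_prod_eq {𝕜 n : Type*} [Field 𝕜] [Fintype n]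
    (f : Module.Dual 𝕜 ((n → 𝕜) × 𝕜)) :
    ∃ x : n → 𝕜, ∀ v r, f (v, r) = v ⬝ᵥ x + r * f (0, 1) := by
  classical
  refine ⟨fun k => f (LinearMap.inl 𝕜 _ 𝕜 fun j => if k = j then 1 else 0), fun v r => ?_⟩
  have hvr : (v, r) = LinearMap.inl 𝕜 _ 𝕜 v + r • (0, 1) := by simp
  rw [hvr, map_add, map_smul, ← LinearMap.comp_apply, LinearMap.pi_apply_eq_sum_univ]
  simp [dotProduct]

section Affine

variable {𝕜 m n : Type*} [Field 𝕜] [LinearOrder 𝕜] [IsStrictOrderedRing 𝕜] [Fintype n]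
  {A : Matrix m n 𝕜} {b : m → 𝕜} {e : n → 𝕜} {φ : 𝕜}

lemma nonpos_of_forall_nonneg_add_mul_le {a d c : 𝕜} (h : ∀ s, 0 ≤ s → a + s * d ≤ c) :
    d ≤ 0 := by
  by_contra! hd
  have hac := h 0 le_rfl
  have := h ((c - a + 1) / d) (div_nonneg (by linarith) hd.le)
  rw [div_mul_cancel₀ _ hd.ne'] at this
  linarith

lemma dotProduct_nonpos_of_mulVec_nonpos (hne : ∃ x₀, A *ᵥ x₀ ≤ b)
    (h : ∀ x, A *ᵥ x ≤ b → e ⬝ᵥ x ≤ φ) {x : n → 𝕜} (hx : A *ᵥ x ≤ 0) : e ⬝ᵥ x ≤ 0 := by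
  obtain ⟨x₀, hx₀⟩ := hne
  refine nonpos_of_forall_nonneg_add_mul_le (a := e ⬝ᵥ x₀) (c := φ) fun s hs => ?_
  have hfeas : A *ᵥ (x₀ + s • x) ≤ b := by
    rw [mulVec_add, mulVec_smul]
    exact add_le_of_le_of_nonpos hx₀ (smul_nonpos_of_nonneg_of_nonpos hs hx)
  simpa only [dotProduct_add, dotProduct_smul, smul_eq_mul] using h _ hfeas

lemma dotProduct_le_mul_of_mulVec_le_smul (hne : ∃ x₀, A *ᵥ x₀ ≤ b)
    (h : ∀ x, A *ᵥ x ≤ b → e ⬝ᵥ x ≤ φ) {x : n → 𝕜} {σ : 𝕜} (hσ : 0 ≤ σ)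
    (hx : A *ᵥ x ≤ σ • b) : e ⬝ᵥ x ≤ σ * φ := by
  rcases hσ.eq_or_lt with rfl | hσ
  · simpa using dotProduct_nonpos_of_mulVec_nonpos hne h (by simpa using hx)
  · have hfeas : A *ᵥ (σ⁻¹ • x) ≤ b := by
      rw [mulVec_smul, inv_smul_le_iff_of_pos hσ]
      exact hx
    have := h _ hfeas
    rwa [dotProduct_smul, smul_eq_mul, inv_mul_le_iff₀ hσ] at this

theorem exists_nonneg_vecMul_eq_of_forall_dotProduct_le [Fintype m] (hne : ∃ x₀, A *ᵥ x₀ ≤ b)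
    (h : ∀ x, A *ᵥ x ≤ b → e ⬝ᵥ x ≤ φ) : ∃ y : m → 𝕜, 0 ≤ y ∧ y ᵥ* A = e ∧ y ⬝ᵥ b ≤ φ := by
  let a : Option m → (n → 𝕜) × 𝕜 := fun o => o.elim (0, 1) fun i => (A i, b i)
  obtain hc | ⟨f, hf, hfc⟩ :=
    PointedCone.mem_hull_image_or_exists_dual (𝕜 := 𝕜) Finset.univ a (e, φ)
  · rw [Finset.coe_univ, Set.image_univ, Submodule.mem_span_range_iff_exists_fun] at hc
    obtain ⟨y, hy⟩ := hc
    simp only [Fintype.sum_option, a, Option.elim_none, Option.elim_some, Prod.ext_iff,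
      Prod.fst_add, Prod.snd_add, Prod.fst_sum, Prod.snd_sum, Prod.smul_fst, Prod.smul_snd] at hy
    obtain ⟨hyA, hyb⟩ := hy
    refine ⟨fun i => y (some i), fun i => (y (some i)).2, ?_, ?_⟩
    · rw [vecMul_eq_sum, ← hyA]
      simp
    · have := (y none).2
      rw [← hyb]
      simp only [dotProduct, ← Nonneg.coe_smul, smul_eq_mul, mul_one]
      linarith
  · obtain ⟨x, hx⟩ := f.exists_apply_prod_eq
    have hτ : 0 ≤ f (0, 1) := hf none (Finset.mem_univ _)
    have hAx : A *ᵥ (-x) ≤ f (0, 1) • b := fun i => by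
      have : 0 ≤ f (A i, b i) := hf (some i) (Finset.mem_univ _)
      rw [hx] at this
      rw [mulVec_neg, Pi.neg_apply, Pi.smul_apply, smul_eq_mul]
      change -(A i ⬝ᵥ x) ≤ f (0, 1) * b i
      linarith
    have := dotProduct_le_mul_of_mulVec_le_smul hne h hτ hAx
    rw [hx] at hfc
    rw [dotProduct_neg] at this
    linarith

end Affine

/-- Affine form of Farkas' lemma: if `{x | A x ≤ b}` is nonempty, then `E x ≤ F` holds for
all `x` with `A x ≤ b` iff there is an entrywise nonnegative matrix `P` with `P A = E` and
`P b ≤ F` (all inequalities entrywise). -/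
theorem affine_farkas {p n q : ℕ}
    (A : Matrix (Fin p) (Fin n) ℝ) (b : Fin p → ℝ)
    (E : Matrix (Fin q) (Fin n) ℝ) (F : Fin q → ℝ)
    (hne : ∃ x : Fin n → ℝ, A.mulVec x ≤ b) :
    (∀ x : Fin n → ℝ, A.mulVec x ≤ b → E.mulVec x ≤ F) ↔
      (∃ P : Matrix (Fin q) (Fin p) ℝ,
        (∀ i j, 0 ≤ P i j) ∧ P * A = E ∧ P.mulVec b ≤ F) := by
  constructor
  · intro h
    choose P hP hPA hPb using fun j =>
      exists_nonneg_vecMul_eq_of_forall_dotProduct_le hne fun x hx => h x hx j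
    exact ⟨Matrix.of P, hP, Matrix.ext fun j k => congrFun (hPA j) k, hPb⟩
  · rintro ⟨P, hP, rfl, hPb⟩ x hx j
    calc ((P * A) *ᵥ x) j = P j ⬝ᵥ (A *ᵥ x) := by rw [← mulVec_mulVec]; rfl
      _ ≤ P j ⬝ᵥ b := dotProduct_le_dotProduct_of_nonneg_left hx (hP j)
      _ ≤ F j := hPb j
end

section
/- Let μ ≥ 0, E ∈ ℝ^{q×p} and F ∈ ℝ^q. Set A_b = [I_p; −I_p] ∈ ℝ^{2p×p} (the vertical stack of the identity and its negative) and B_b = 𝟙_{2p} (the all-ones vector). Then the following are equivalent: (i) μ·(E Y) ≤ F holds entrywise for every Y ∈ ℝ^p with ‖Y‖∞ ≤ 1; (ii) there exists a matrix P ∈ ℝ^{q×2p} with all entries nonnegative such that P A_b = μ E and P B_b ≤ F. -/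
open Matrix

/-- Box-constrained form of Farkas' lemma: for `μ ≥ 0`, `μ • (E Y) ≤ F` holds (entrywise)
for every `Y` with `‖Y‖∞ ≤ 1` iff there is an entrywise nonnegative matrix `P` with
`P A_b = μ E` and `P B_b ≤ F`, where `A_b = [I; -I]` and `B_b` is the all-ones vector. -/
theorem box_farkas {p q : ℕ} (μ : ℝ) (hμ : 0 ≤ μ)
    (E : Matrix (Fin q) (Fin p) ℝ) (F : Fin q → ℝ) :
    (∀ Y : Fin p → ℝ, ‖Y‖ ≤ 1 → μ • E.mulVec Y ≤ F) ↔
      (∃ P : Matrix (Fin q) (Fin p ⊕ Fin p) ℝ,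
        (∀ i j, 0 ≤ P i j) ∧
        P * Matrix.fromRows (1 : Matrix (Fin p) (Fin p) ℝ)
            (-(1 : Matrix (Fin p) (Fin p) ℝ)) = μ • E ∧
        P.mulVec (fun _ => (1 : ℝ)) ≤ F) := by
  constructor
  · intro h
    refine ⟨Matrix.of (fun i => Sum.elim (fun j => μ * max (E i j) 0)
      (fun j => μ * max (-(E i j)) 0)), ?_, ?_, ?_⟩
    · rintro i (j | j) <;> simp only [Matrix.of_apply, Sum.elim_inl, Sum.elim_inr] <;>
        exact mul_nonneg hμ (le_max_right _ _)
    · ext i j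
      simp only [Matrix.mul_apply, Fintype.sum_sum_type, Matrix.fromRows_apply_inl,
        Matrix.fromRows_apply_inr, Matrix.one_apply, Matrix.neg_apply, Matrix.of_apply,
        Sum.elim_inl, Sum.elim_inr, mul_ite, mul_one, mul_zero, mul_neg,
        Finset.sum_ite_eq', Finset.mem_univ, if_true, Matrix.smul_apply, smul_eq_mul]
      simp [apply_ite Neg.neg, Finset.sum_ite_eq, Finset.sum_ite_eq']
      rcases le_total (E i j) 0 with hj | hj
      · rw [max_eq_right hj, max_eq_left (neg_nonneg.mpr hj)]; ring
      · rw [max_eq_left hj, max_eq_right (neg_nonpos.mpr hj)]; ring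
    · intro i
      have hY : ‖(fun j => if 0 ≤ E i j then (1:ℝ) else -1)‖ ≤ 1 := by
        rw [pi_norm_le_iff_of_nonneg zero_le_one]
        intro j
        by_cases hj : 0 ≤ E i j <;> simp [hj]
      have := h _ hY i
      refine le_trans (le_of_eq ?_) this
      simp only [Matrix.mulVec, dotProduct, Matrix.of_apply, Fintype.sum_sum_type,
        Sum.elim_inl, Sum.elim_inr, Pi.smul_apply, smul_eq_mul, mul_one]
      rw [← Finset.sum_add_distrib, Finset.mul_sum]
      refine Finset.sum_congr rfl fun j _ => ?_
      by_cases hj : 0 ≤ E i j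
      · rw [if_pos hj, max_eq_left hj, max_eq_right (neg_nonpos.mpr hj)]; ring
      · push_neg at hj
        rw [if_neg hj.not_ge, max_eq_right hj.le, max_eq_left (neg_nonneg.mpr hj.le)]; ring
  · rintro ⟨P, hP, hPA, hPB⟩ Y hY i
    rw [pi_norm_le_iff_of_nonneg zero_le_one] at hY
    simp only [Real.norm_eq_abs] at hY
    have key : (μ • E).mulVec Y i ≤ P.mulVec (fun _ => (1:ℝ)) i := by
      rw [← hPA, ← Matrix.mulVec_mulVec]
      simp only [Matrix.mulVec, dotProduct]
      refine Finset.sum_le_sum fun k _ => ?_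
      refine mul_le_mul_of_nonneg_left ?_ (hP i k)
      rcases k with j | j
      · simpa [Matrix.mulVec, dotProduct, Matrix.one_apply, mul_ite,
          Finset.sum_ite_eq', Matrix.fromRows_apply_inl] using (abs_le.mp (hY j)).2
      · simp [Matrix.mulVec, dotProduct, Matrix.one_apply, ite_mul,
          apply_ite Neg.neg, Finset.sum_ite_eq]
        linarith [(abs_le.mp (hY j)).1]
    calc μ • E.mulVec Y i = (μ • E).mulVec Y i := by
          rw [Matrix.smul_mulVec]; rfl
      _ ≤ _ := key
      _ ≤ F i := hPB i
end

section
/- Fix an initial state x ∈ ℝ^n, μ ≥ 0, controller parameters α₁ ∈ ℝ^{m×n}, α₂ ∈ ℝ^m, and a horizon N. The following are equivalent: (i) for every disturbance sequence d(0), …, d(N−1) with ‖d(i)‖∞ ≤ μ for all i, the closed-loop trajectory x(0) = x, x(k+1) = A_k x(k) + B_k (α₁ x(k) + α₂) + d(k) satisfies G_k x(k) ≤ H_k for all k = 0, …, N; (ii) there exists a matrix P ∈ ℝ^{(N+1)q × 2n(N+1)} with all entries nonnegative such that P A_b = μ E_x(α₁) and P B_b ≤ F_x(x, α₁, α₂),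 where E_x(α₁) is the vertical stack of E_{x0}, …, E_{xN} and F_x(x, α₁, α₂) is the vertical stack of F_{x0}, …, F_{xN}. -/
open Matrix Finset

noncomputable section

/-- Ordered product `M (k-1) * M (k-2) * ⋯ * M i` (empty product = identity when `k ≤ i`). -/
def mprod {n : ℕ} (M : ℕ → Matrix (Fin n) (Fin n) ℝ) (i k : ℕ) :
    Matrix (Fin n) (Fin n) ℝ :=
  (((List.range' i (k - i)).reverse).map M).prod

def Abar {n m : ℕ} (A : ℕ → Matrix (Fin n) (Fin n) ℝ) (B : ℕ → Matrix (Fin n) (Fin m) ℝ)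
    (α₁ : Matrix (Fin m) (Fin n) ℝ) (j : ℕ) : Matrix (Fin n) (Fin n) ℝ :=
  A j + B j * α₁

def trajCL {n m : ℕ} (A : ℕ → Matrix (Fin n) (Fin n) ℝ) (B : ℕ → Matrix (Fin n) (Fin m) ℝ)
    (α₁ : Matrix (Fin m) (Fin n) ℝ) (α₂ : Fin m → ℝ) (d : ℕ → Fin n → ℝ)
    (x0 : Fin n → ℝ) : ℕ → Fin n → ℝ
  | 0 => x0
  | k + 1 =>
      (A k).mulVec (trajCL A B α₁ α₂ d x0 k)
        + (B k).mulVec (α₁.mulVec (trajCL A B α₁ α₂ d x0 k) + α₂) + d k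

def Eblk {n : ℕ} (N : ℕ) (M : ℕ → Matrix (Fin n) (Fin n) ℝ) (k : ℕ) :
    Matrix (Fin n) (Fin (N + 1) × Fin n) ℝ :=
  Matrix.of fun r jc =>
    if 1 ≤ (jc.1 : ℕ) ∧ (jc.1 : ℕ) ≤ k then mprod M (jc.1 : ℕ) k r jc.2 else 0

def Fblk {n m : ℕ} (A : ℕ → Matrix (Fin n) (Fin n) ℝ) (B : ℕ → Matrix (Fin n) (Fin m) ℝ)
    (α₁ : Matrix (Fin m) (Fin n) ℝ) (α₂ : Fin m → ℝ) (x : Fin n → ℝ) (k : ℕ) : Fin n → ℝ :=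
  (mprod (Abar A B α₁) 0 k).mulVec x
    + ∑ i ∈ Finset.range k, (mprod (Abar A B α₁) (i + 1) k * B i).mulVec α₂

def Ex {n m q : ℕ} (N : ℕ) (A : ℕ → Matrix (Fin n) (Fin n) ℝ)
    (B : ℕ → Matrix (Fin n) (Fin m) ℝ) (G : ℕ → Matrix (Fin q) (Fin n) ℝ)
    (α₁ : Matrix (Fin m) (Fin n) ℝ) :
    Matrix (Fin (N + 1) × Fin q) (Fin (N + 1) × Fin n) ℝ :=
  Matrix.of fun kr jc => (G (kr.1 : ℕ) * Eblk N (Abar A B α₁) (kr.1 : ℕ)) kr.2 jc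

def Fx {n m q : ℕ} (N : ℕ) (A : ℕ → Matrix (Fin n) (Fin n) ℝ)
    (B : ℕ → Matrix (Fin n) (Fin m) ℝ) (G : ℕ → Matrix (Fin q) (Fin n) ℝ)
    (H : ℕ → Fin q → ℝ) (α₁ : Matrix (Fin m) (Fin n) ℝ) (α₂ : Fin m → ℝ)
    (x : Fin n → ℝ) : Fin (N + 1) × Fin q → ℝ :=
  fun kr => H (kr.1 : ℕ) kr.2 - (G (kr.1 : ℕ)).mulVec (Fblk A B α₁ α₂ x (kr.1 : ℕ)) kr.2

def Au (m : ℕ) : Matrix (Fin m ⊕ Fin m) (Fin m) ℝ := Matrix.fromRows 1 (-1)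

def Sk {n m : ℕ} (A : ℕ → Matrix (Fin n) (Fin n) ℝ) (B : ℕ → Matrix (Fin n) (Fin m) ℝ)
    (α₁ : Matrix (Fin m) (Fin n) ℝ) (α₂ : Fin m → ℝ) (x : Fin n → ℝ) (k : ℕ) : Fin m → ℝ :=
  α₁.mulVec (Fblk A B α₁ α₂ x k) + α₂

def Ecl {n m q : ℕ} (N : ℕ) (A : ℕ → Matrix (Fin n) (Fin n) ℝ)
    (B : ℕ → Matrix (Fin n) (Fin m) ℝ) (G : ℕ → Matrix (Fin q) (Fin n) ℝ)
    (α₁ : Matrix (Fin m) (Fin n) ℝ) :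
    Matrix ((Fin (N + 1) × Fin q) ⊕ (Fin N × (Fin m ⊕ Fin m))) (Fin (N + 1) × Fin n) ℝ :=
  Matrix.fromRows (Ex N A B G α₁)
    (Matrix.of fun kr jc => (Au m * α₁ * Eblk N (Abar A B α₁) (kr.1 : ℕ)) kr.2 jc)

def Fcl {n m q : ℕ} (N : ℕ) (A : ℕ → Matrix (Fin n) (Fin n) ℝ)
    (B : ℕ → Matrix (Fin n) (Fin m) ℝ) (G : ℕ → Matrix (Fin q) (Fin n) ℝ)
    (H : ℕ → Fin q → ℝ) (α₁ : Matrix (Fin m) (Fin n) ℝ) (α₂ : Fin m → ℝ)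
    (x : Fin n → ℝ) (ε : ℝ) : (Fin (N + 1) × Fin q) ⊕ (Fin N × (Fin m ⊕ Fin m)) → ℝ :=
  Sum.elim (Fx N A B G H α₁ α₂ x)
    (fun kr => ε - (Au m).mulVec (Sk A B α₁ α₂ x (kr.1 : ℕ)) kr.2)

def AbM (N n : ℕ) :
    Matrix ((Fin (N + 1) × Fin n) ⊕ (Fin (N + 1) × Fin n)) (Fin (N + 1) × Fin n) ℝ :=
  Matrix.fromRows 1 (-1)

def BbV (N n : ℕ) : (Fin (N + 1) × Fin n) ⊕ (Fin (N + 1) × Fin n) → ℝ := fun _ => 1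

def trajOL {n m : ℕ} (A : ℕ → Matrix (Fin n) (Fin n) ℝ) (B : ℕ → Matrix (Fin n) (Fin m) ℝ)
    (u : ℕ → Fin m → ℝ) (d : ℕ → Fin n → ℝ) (x0 : Fin n → ℝ) : ℕ → Fin n → ℝ
  | 0 => x0
  | k + 1 => (A k).mulVec (trajOL A B u d x0 k) + (B k).mulVec (u k) + d k

def Eol {n q : ℕ} (N : ℕ) (A : ℕ → Matrix (Fin n) (Fin n) ℝ)
    (G : ℕ → Matrix (Fin q) (Fin n) ℝ) :
    Matrix (Fin (N + 1) × Fin q) (Fin (N + 1) × Fin n) ℝ :=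
  Matrix.of fun kr jc => (G (kr.1 : ℕ) * Eblk N A (kr.1 : ℕ)) kr.2 jc

def Fol {n m q : ℕ} (N : ℕ) (A : ℕ → Matrix (Fin n) (Fin n) ℝ)
    (B : ℕ → Matrix (Fin n) (Fin m) ℝ) (G : ℕ → Matrix (Fin q) (Fin n) ℝ)
    (H : ℕ → Fin q → ℝ) (x : Fin n → ℝ) (ut : ℕ → Fin m → ℝ) (ε : ℝ) :
    Fin (N + 1) × Fin q → ℝ :=
  fun kr => H (kr.1 : ℕ) kr.2
    - (G (kr.1 : ℕ)).mulVec ((mprod A 0 (kr.1 : ℕ)).mulVec x) kr.2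
    - ε * (G (kr.1 : ℕ)).mulVec
        (∑ i ∈ Finset.range (kr.1 : ℕ), (mprod A (i + 1) (kr.1 : ℕ) * B i).mulVec (ut i)) kr.2

-- AUX LEMMAS (to be inserted before the theorem)
lemma mulVec_sum' {R : Type*} [CommRing R] {p r : Type*} [Fintype r] {ι : Type*}
    (M : Matrix p r R) (s : Finset ι) (f : ι → r → R) :
    M.mulVec (∑ i ∈ s, f i) = ∑ i ∈ s, M.mulVec (f i) := by
  ext j
  simp [Matrix.mulVec, dotProduct, Finset.sum_apply, Finset.mul_sum]
  rw [Finset.sum_comm]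

lemma mprod_self {n : ℕ} (M : ℕ → Matrix (Fin n) (Fin n) ℝ) (k : ℕ) : mprod M k k = 1 := by
  simp [mprod]

lemma mprod_succ {n : ℕ} (M : ℕ → Matrix (Fin n) (Fin n) ℝ) {i k : ℕ} (h : i ≤ k) :
    mprod M i (k+1) = M k * mprod M i k := by
  have h1 : k + 1 - i = (k - i) + 1 := by omega
  have h2 : i + 1 * (k - i) = k := by omega
  rw [mprod, h1, List.range'_concat, List.reverse_append, h2]
  simp [mprod]

lemma traj_eq {n m : ℕ} (A : ℕ → Matrix (Fin n) (Fin n) ℝ) (B : ℕ → Matrix (Fin n) (Fin m) ℝ)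
    (α₁ : Matrix (Fin m) (Fin n) ℝ) (α₂ : Fin m → ℝ) (d : ℕ → Fin n → ℝ) (x : Fin n → ℝ)
    (k : ℕ) :
    trajCL A B α₁ α₂ d x k =
      Fblk A B α₁ α₂ x k
        + ∑ i ∈ Finset.range k, (mprod (Abar A B α₁) (i + 1) k).mulVec (d i) := by
  induction k with
  | zero => simp [trajCL, Fblk, mprod_self]
  | succ k ih =>
      have step : trajCL A B α₁ α₂ d x (k+1)
          = (Abar A B α₁ k).mulVec (trajCL A B α₁ α₂ d x k) + (B k).mulVec α₂ + d k := by
        simp only [trajCL, Abar, Matrix.add_mulVec, Matrix.mulVec_add,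
          Matrix.mulVec_mulVec]
        abel
      rw [step, ih]
      have e2 : ∑ i ∈ Finset.range (k+1), (mprod (Abar A B α₁) (i + 1) (k+1)).mulVec (d i)
          = (Abar A B α₁ k).mulVec
              (∑ i ∈ Finset.range k, (mprod (Abar A B α₁) (i + 1) k).mulVec (d i)) + d k := by
        rw [Finset.sum_range_succ, mprod_self, Matrix.one_mulVec, mulVec_sum']
        congr 1
        refine Finset.sum_congr rfl fun i hi => ?_
        have hik := Finset.mem_range.mp hi
        rw [mprod_succ _ (by omega : i + 1 ≤ k), Matrix.mulVec_mulVec]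
      have e1 : Fblk A B α₁ α₂ x (k+1)
          = (Abar A B α₁ k).mulVec (Fblk A B α₁ α₂ x k) + (B k).mulVec α₂ := by
        simp only [Fblk, Matrix.mulVec_add, mulVec_sum']
        rw [Finset.sum_range_succ, mprod_self, Matrix.one_mul,
          mprod_succ _ (by omega : 0 ≤ k)]
        have e3 : ∑ i ∈ Finset.range k, (mprod (Abar A B α₁) (i + 1) (k+1) * B i).mulVec α₂
            = ∑ i ∈ Finset.range k,
                ((Abar A B α₁ k * mprod (Abar A B α₁) (i + 1) k) * B i).mulVec α₂ := by
          refine Finset.sum_congr rfl fun i hi => ?_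
          have hik := Finset.mem_range.mp hi
          rw [mprod_succ _ (by omega : i + 1 ≤ k)]
        rw [e3]
        simp only [Matrix.mul_assoc, ← Matrix.mulVec_mulVec]
        abel
      rw [e1, e2, Matrix.mulVec_add]
      abel

/-- clip a natural number into `Fin (N+1)` -/
def finClip (N j : ℕ) : Fin (N + 1) := ⟨min j N, by omega⟩

lemma finClip_eq {N j : ℕ} (h : j ≤ N) : (finClip N j : ℕ) = j := by
  simp [finClip, h]

lemma Eblk_mulVec {n N : ℕ} (M : ℕ → Matrix (Fin n) (Fin n) ℝ) {k : ℕ} (hk : k ≤ N)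
    (D : Fin (N+1) × Fin n → ℝ) :
    (Eblk N M k).mulVec D = ∑ i ∈ Finset.range k,
      (mprod M (i+1) k).mulVec (fun c => D (finClip N (i+1), c)) := by
  funext r
  set f' : ℕ → ℝ := fun j =>
    if 1 ≤ j ∧ j ≤ k then (mprod M j k).mulVec (fun c => D (finClip N j, c)) r else 0
    with hf'
  have hstep : ∀ j : Fin (N+1),
      ∑ c, (if 1 ≤ (j:ℕ) ∧ (j:ℕ) ≤ k then mprod M (j:ℕ) k r c else 0) * D (j, c)
        = f' (j : ℕ) := by
    intro j
    rw [hf']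
    beta_reduce
    by_cases h : 1 ≤ (j:ℕ) ∧ (j:ℕ) ≤ k
    · have hj : finClip N (j:ℕ) = j := by
        apply Fin.ext; simp [finClip]; omega
      rw [if_pos h, hj]
      simp [Matrix.mulVec, dotProduct, h]
    · rw [if_neg h]
      simp [h]
  calc (Eblk N M k).mulVec D r
      = ∑ j : Fin (N+1), ∑ c,
          (if 1 ≤ (j:ℕ) ∧ (j:ℕ) ≤ k then mprod M (j:ℕ) k r c else 0) * D (j, c) := by
        simp [Matrix.mulVec, dotProduct, Eblk, Fintype.sum_prod_type]
    _ = ∑ j : Fin (N+1), f' (j : ℕ) := Finset.sum_congr rfl fun j _ => hstep j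
    _ = ∑ j ∈ Finset.range (N+1), f' j := Fin.sum_univ_eq_sum_range f' (N+1)
    _ = ∑ j ∈ Finset.range (k+1), f' j := by
        refine (Finset.sum_subset (by
          intro a ha; simp only [Finset.mem_range] at *; omega) ?_).symm
        intro j hj hjk
        simp only [Finset.mem_range] at hj hjk
        rw [hf']
        beta_reduce
        exact if_neg (by omega)
    _ = (∑ i ∈ Finset.range k, f' (i+1)) + f' 0 := Finset.sum_range_succ' f' k
    _ = ∑ i ∈ Finset.range k,
          (mprod M (i+1) k).mulVec (fun c => D (finClip N (i+1), c)) r := by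
        have h0 : f' 0 = 0 := by rw [hf']; simp
        rw [h0, add_zero]
        refine Finset.sum_congr rfl fun i hi => ?_
        have hik := Finset.mem_range.mp hi
        rw [hf']
        beta_reduce
        exact if_pos (by omega)
  simp [Finset.sum_apply]

lemma sign_mul_self' (t : ℝ) : t * Real.sign t = |t| := by
  rcases lt_trichotomy t 0 with h | h | h
  · rw [Real.sign_of_neg h, abs_of_neg h]; ring
  · simp [h]
  · rw [Real.sign_of_pos h, abs_of_pos h]; ring

lemma abs_sign_le (t : ℝ) : |Real.sign t| ≤ 1 := by
  rcases lt_trichotomy t 0 with h | h | h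
  · rw [Real.sign_of_neg h]; norm_num
  · simp [h]
  · rw [Real.sign_of_pos h]; norm_num

lemma max_sub_max (a : ℝ) : max a 0 - max (-a) 0 = a := by
  rcases le_total a 0 with h | h
  · rw [max_eq_right h, max_eq_left (by linarith)]; ring
  · rw [max_eq_left h, max_eq_right (by linarith)]; ring

lemma max_add_max (a : ℝ) : max a 0 + max (-a) 0 = |a| := by
  rcases le_total a 0 with h | h
  · rw [max_eq_right h, max_eq_left (by linarith), abs_of_nonpos h]; ring
  · rw [max_eq_left h, max_eq_right (by linarith), abs_of_nonneg h]; ring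

/-- State-constraint robust condition ↔ Farkas certificate, for the closed-loop LTV system
with linear controller `u(k) = α₁ x(k) + α₂` and polytopic specification
`G_k x(k) ≤ H_k`, `k = 0, …, N`, over disturbances with `‖d(i)‖∞ ≤ μ`. -/
theorem resilience_state_farkas {n m q N : ℕ}
    (A : ℕ → Matrix (Fin n) (Fin n) ℝ) (B : ℕ → Matrix (Fin n) (Fin m) ℝ)
    (G : ℕ → Matrix (Fin q) (Fin n) ℝ) (H : ℕ → Fin q → ℝ)
    (x : Fin n → ℝ) (μ : ℝ) (hμ : 0 ≤ μ)
    (α₁ : Matrix (Fin m) (Fin n) ℝ) (α₂ : Fin m → ℝ) :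
    (∀ d : ℕ → Fin n → ℝ, (∀ i, i < N → ‖d i‖ ≤ μ) →
        ∀ k, k ≤ N → (G k).mulVec (trajCL A B α₁ α₂ d x k) ≤ H k) ↔
      (∃ P : Matrix (Fin (N + 1) × Fin q)
          ((Fin (N + 1) × Fin n) ⊕ (Fin (N + 1) × Fin n)) ℝ,
        (∀ i j, 0 ≤ P i j) ∧
        P * AbM N n = μ • Ex N A B G α₁ ∧
        P.mulVec (BbV N n) ≤ Fx N A B G H α₁ α₂ x) := by
  classical
  set Exm := Ex N A B G α₁ with hExm
  set Fxv := Fx N A B G H α₁ α₂ x with hFxv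
  set Dv : (ℕ → Fin n → ℝ) → (Fin (N+1) × Fin n → ℝ) :=
    fun d jc => if 1 ≤ (jc.1:ℕ) then d ((jc.1:ℕ)-1) jc.2 else 0 with hDv
  -- entries of Ex in block column 0 vanish
  have hEx0 : ∀ (r : Fin (N+1) × Fin q) (jf : Fin (N+1)) (c : Fin n),
      (jf : ℕ) = 0 → Exm r (jf, c) = 0 := by
    intro r jf c h
    simp [hExm, Ex, Matrix.mul_apply, Eblk, h]
  -- Ex mulVec in terms of Eblk
  have hEmul : ∀ (k : ℕ) (hk : k < N + 1) (row : Fin q) (v : Fin (N+1) × Fin n → ℝ),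
      Exm.mulVec v (⟨k, hk⟩, row)
        = (G k).mulVec ((Eblk N (Abar A B α₁) k).mulVec v) row := by
    intro k hk row v
    rw [Matrix.mulVec_mulVec]
    rfl
  -- trajectory decomposition
  have hdecomp : ∀ (d : ℕ → Fin n → ℝ) (k : ℕ) (hk : k < N + 1) (row : Fin q),
      (G k).mulVec (trajCL A B α₁ α₂ d x k) row
        = (G k).mulVec (Fblk A B α₁ α₂ x k) row + Exm.mulVec (Dv d) (⟨k, hk⟩, row) := by
    intro d k hk row
    rw [hEmul k hk row]
    have hE : (Eblk N (Abar A B α₁) k).mulVec (Dv d)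
        = ∑ i ∈ Finset.range k, (mprod (Abar A B α₁) (i+1) k).mulVec (d i) := by
      rw [Eblk_mulVec _ (by omega : k ≤ N)]
      refine Finset.sum_congr rfl fun i hi => ?_
      have hik := Finset.mem_range.mp hi
      have hfun : (fun c => Dv d (finClip N (i+1), c)) = d i := by
        funext c
        simp [hDv, finClip_eq (by omega : i + 1 ≤ N)]
      rw [hfun]
    rw [hE, traj_eq, Matrix.mulVec_add]
    rfl
  constructor
  · -- robust → certificate
    intro hrob
    have mid : ∀ r, (∑ j, μ * |Exm r j|) ≤ Fxv r := by
      rintro ⟨kf, row⟩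
      set d : ℕ → Fin n → ℝ :=
        fun i c => μ * Real.sign (Exm (kf, row) (finClip N (i+1), c)) with hd
      have hdb : ∀ i, i < N → ‖d i‖ ≤ μ := by
        intro i _
        rw [pi_norm_le_iff_of_nonneg hμ]
        intro c
        rw [hd]
        beta_reduce
        rw [Real.norm_eq_abs, abs_mul, abs_of_nonneg hμ]
        calc μ * |Real.sign (Exm (kf, row) (finClip N (i+1), c))|
            ≤ μ * 1 := by
              exact mul_le_mul_of_nonneg_left (abs_sign_le _) hμ
          _ = μ := mul_one μ
      have h1 := (hrob d hdb (kf : ℕ) (by omega)) row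
      rw [hdecomp d (kf : ℕ) kf.isLt row] at h1
      simp only [Fin.eta] at h1
      have h2 : Exm.mulVec (Dv d) (kf, row) ≤ Fxv (kf, row) := by
        have : Fxv (kf, row)
            = H (kf : ℕ) row - (G (kf : ℕ)).mulVec (Fblk A B α₁ α₂ x (kf : ℕ)) row := rfl
        rw [this]; linarith
      refine le_trans (le_of_eq ?_) h2
      rw [Matrix.mulVec]
      refine Finset.sum_congr rfl fun jc _ => ?_
      obtain ⟨jf, c⟩ := jc
      by_cases hj : 1 ≤ (jf : ℕ)
      · have hDval : Dv d (jf, c) = μ * Real.sign (Exm (kf, row) (jf, c)) := by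
          rw [hDv]
          beta_reduce
          rw [if_pos hj, hd]
          beta_reduce
          have hfix : finClip N (((jf:ℕ) - 1) + 1) = jf := by
            apply Fin.ext
            rw [finClip_eq (by omega : ((jf:ℕ) - 1) + 1 ≤ N)]
            omega
          rw [hfix]
        rw [hDval]
        have := sign_mul_self' (Exm (kf, row) (jf, c))
        ring_nf
        ring_nf at this
        nlinarith [this]
      · have h0 : Exm (kf, row) (jf, c) = 0 := hEx0 _ jf c (by omega)
        rw [h0]
        simp [hDv, hj]
    refine ⟨Matrix.of fun r s => Sum.elim (fun j => max (μ * Exm r j) 0)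
        (fun j => max (-(μ * Exm r j)) 0) s, ?_, ?_, ?_⟩
    · rintro r (j | j) <;> exact le_max_right _ _
    · ext r c
      rw [Matrix.mul_apply, Fintype.sum_sum_type]
      simp only [Matrix.of_apply, Sum.elim_inl, Sum.elim_inr, AbM,
        Matrix.fromRows_apply_inl, Matrix.fromRows_apply_inr, Matrix.neg_apply,
        Matrix.one_apply, mul_ite, mul_one, mul_zero, mul_neg,
        Finset.sum_ite_eq', Finset.mem_univ, if_true, Finset.sum_neg_distrib]
      rw [Matrix.smul_apply, smul_eq_mul, ← sub_eq_add_neg, max_sub_max]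
    · intro r
      rw [Matrix.mulVec, dotProduct, Fintype.sum_sum_type]
      simp only [Matrix.of_apply, Sum.elim_inl, Sum.elim_inr, BbV, mul_one]
      rw [← Finset.sum_add_distrib]
      calc ∑ j, (max (μ * Exm r j) 0 + max (-(μ * Exm r j)) 0)
          = ∑ j, μ * |Exm r j| := by
            refine Finset.sum_congr rfl fun j _ => ?_
            rw [max_add_max, abs_mul, abs_of_nonneg hμ]
        _ ≤ Fxv r := mid r
  · -- certificate → robust
    rintro ⟨P, hP0, hPA, hPB⟩ d hd k hk
    have mid : ∀ r, (∑ j, μ * |Exm r j|) ≤ Fxv r := by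
      intro r
      have h1 : ∀ j, μ * Exm r j = P r (Sum.inl j) - P r (Sum.inr j) := by
        intro j
        have h := congrFun (congrFun hPA r) j
        rw [Matrix.mul_apply, Fintype.sum_sum_type] at h
        simp only [AbM, Matrix.fromRows_apply_inl, Matrix.fromRows_apply_inr,
          Matrix.neg_apply, Matrix.one_apply, mul_ite, mul_one, mul_zero, mul_neg,
          Finset.sum_neg_distrib, Finset.sum_ite_eq', Finset.mem_univ, if_true] at h
        rw [Matrix.smul_apply, smul_eq_mul] at h
        linarith [h]
      calc ∑ j, μ * |Exm r j|
          = ∑ j, |P r (Sum.inl j) - P r (Sum.inr j)| := by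
            refine Finset.sum_congr rfl fun j _ => ?_
            rw [← h1 j, abs_mul, abs_of_nonneg hμ]
        _ ≤ ∑ j, (P r (Sum.inl j) + P r (Sum.inr j)) := by
            refine Finset.sum_le_sum fun j _ => ?_
            have := abs_sub (P r (Sum.inl j)) (P r (Sum.inr j))
            calc |P r (Sum.inl j) - P r (Sum.inr j)|
                ≤ |P r (Sum.inl j)| + |P r (Sum.inr j)| := abs_sub _ _
              _ = P r (Sum.inl j) + P r (Sum.inr j) := by
                  rw [abs_of_nonneg (hP0 _ _), abs_of_nonneg (hP0 _ _)]
        _ = P.mulVec (BbV N n) r := by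
            rw [Matrix.mulVec, dotProduct, Fintype.sum_sum_type]
            simp only [BbV, mul_one]
            rw [Finset.sum_add_distrib]
        _ ≤ Fxv r := hPB r
    rw [Pi.le_def]
    intro row
    rw [hdecomp d k (by omega) row]
    have h2 : Exm.mulVec (Dv d) (⟨k, by omega⟩, row) ≤ ∑ j, μ * |Exm (⟨k, by omega⟩, row) j| := by
      rw [Matrix.mulVec]
      refine Finset.sum_le_sum fun jc _ => ?_
      obtain ⟨jf, c⟩ := jc
      have hDb : |Dv d (jf, c)| ≤ μ := by
        rw [hDv]
        beta_reduce
        by_cases hj : 1 ≤ (jf : ℕ)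
        · rw [if_pos hj]
          calc |d ((jf:ℕ) - 1) c| ≤ ‖d ((jf:ℕ) - 1)‖ := by
                rw [← Real.norm_eq_abs]; exact norm_le_pi_norm _ c
            _ ≤ μ := hd _ (by have := jf.isLt; omega)
        · rw [if_neg hj]; simpa using hμ
      calc Exm (⟨k, by omega⟩, row) (jf, c) * Dv d (jf, c)
          ≤ |Exm (⟨k, by omega⟩, row) (jf, c) * Dv d (jf, c)| := le_abs_self _
        _ = |Exm (⟨k, by omega⟩, row) (jf, c)| * |Dv d (jf, c)| := abs_mul _ _
        _ ≤ |Exm (⟨k, by omega⟩, row) (jf, c)| * μ :=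
            mul_le_mul_of_nonneg_left hDb (abs_nonneg _)
        _ = μ * |Exm (⟨k, by omega⟩, row) (jf, c)| := mul_comm _ _
    have h3 := mid (⟨k, by omega⟩, row)
    have h4 : Fxv (⟨k, by omega⟩, row)
        = H k row - (G k).mulVec (Fblk A B α₁ α₂ x k) row := rfl
    rw [h4] at h3
    linarith
end
end
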